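/- Let ν ∈ ℝ³ be a unit vector and let R ∈ SO(3) satisfy tr R ≠ −1. Then there exists a unique pair of vectors (b, d) ∈ ℝ³ × ℝ³ with b·ν = 0 and d parallel to ν (i.e., d = tν for some t ∈ ℝ) such that R = Rot(b) · Rot(d). In particular, R decomposes uniquely as R = R_b R_d with R_d = Rot(d) a rotation about the axis ν (a drilling rotation) and R_b = Rot(b) a rotation about an axis lying in the plane orthogonal to ν (a bending rotation). -/
import Mathlib


open Matrix

noncomputable section

/-- Euclidean dot product on `ℝ³`. -/
def dot3 (x y : Fin 3 → ℝ) : ℝ := x 0 * y 0 + x 1 * y 1 + x 2 * y 2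

/-- Euclidean length on `ℝ³`. -/
def len3 (x : Fin 3 → ℝ) : ℝ := Real.sqrt (dot3 x x)

/-- The skew-symmetric matrix `W(v)` with `W(v) u = v × u`. -/
def skewW (v : Fin 3 → ℝ) : Matrix (Fin 3) (Fin 3) ℝ :=
  !![0, -(v 2), v 1; v 2, 0, -(v 0); -(v 1), v 0, 0]

/-- The rotation with Rodrigues/Gibbs vector `v`: `Rot v = (I − W(v))⁻¹ (I + W(v))`. -/
def gibbsRot (v : Fin 3 → ℝ) : Matrix (Fin 3) (Fin 3) ℝ :=
  (1 - skewW v)⁻¹ * (1 + skewW v)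

/-! ### Auxiliary material -/

/-- Cross product on `Fin 3 → ℝ`. -/
def cross3 (x y : Fin 3 → ℝ) : Fin 3 → ℝ :=
  ![x 1 * y 2 - x 2 * y 1, x 2 * y 0 - x 0 * y 2, x 0 * y 1 - x 1 * y 0]

/-- The numerator matrix of the Cayley transform. -/
def cayE (v : Fin 3 → ℝ) : Matrix (Fin 3) (Fin 3) ℝ :=
  !![1 + v 0^2 - v 1^2 - v 2^2, 2*(v 0*v 1 - v 2), 2*(v 0*v 2 + v 1);
     2*(v 0*v 1 + v 2), 1 - v 0^2 + v 1^2 - v 2^2, 2*(v 1*v 2 - v 0);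
     2*(v 0*v 2 - v 1), 2*(v 1*v 2 + v 0), 1 - v 0^2 - v 1^2 + v 2^2]

lemma det_one_sub_skewW (v : Fin 3 → ℝ) : (1 - skewW v).det = 1 + dot3 v v := by
  simp [Matrix.det_fin_three, skewW, dot3, Matrix.one_apply]
  ring

lemma one_add_dot3_pos (v : Fin 3 → ℝ) : 0 < 1 + dot3 v v := by
  have := sq_nonneg (v 0); have := sq_nonneg (v 1); have := sq_nonneg (v 2)
  simp [dot3]; nlinarith

lemma cayE_mul (v : Fin 3 → ℝ) :
    (1 - skewW v) * cayE v = (1 + dot3 v v) • (1 + skewW v) := by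
  ext i j
  fin_cases i <;> fin_cases j <;>
    simp [Matrix.mul_apply, Fin.sum_univ_three, skewW, cayE, dot3, Matrix.one_apply] <;> ring

lemma isUnit_det_one_sub (v : Fin 3 → ℝ) : IsUnit (1 - skewW v).det := by
  rw [det_one_sub_skewW]; exact (one_add_dot3_pos v).ne'.isUnit

lemma gibbsRot_eq (v : Fin 3 → ℝ) : gibbsRot v = (1 + dot3 v v)⁻¹ • cayE v := by
  have h0 := (one_add_dot3_pos v).ne'
  have key : (1 - skewW v) * ((1 + dot3 v v)⁻¹ • cayE v) = 1 + skewW v := by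
    rw [Matrix.mul_smul, cayE_mul, smul_smul, inv_mul_cancel₀ h0, one_smul]
  rw [gibbsRot, ← key, Matrix.nonsing_inv_mul_cancel_left _ _ (isUnit_det_one_sub v)]

/-- Gibbs vector composition rule for orthogonal Gibbs vectors. -/
lemma gibbsRot_mul {b d : Fin 3 → ℝ} (hbd : dot3 b d = 0) :
    gibbsRot b * gibbsRot d = gibbsRot (b + d + cross3 b d) := by
  have hq : 1 + dot3 (b + d + cross3 b d) (b + d + cross3 b d)
      = (1 + dot3 b b) * (1 + dot3 d d) := by
    simp only [dot3, cross3, Pi.add_apply] at hbd ⊢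
    simp
    linear_combination (-(b 0 * d 0) - b 1 * d 1 - b 2 * d 2 + 2) * hbd
  have hE : cayE b * cayE d = cayE (b + d + cross3 b d) := by
    simp only [dot3] at hbd
    ext i j
    fin_cases i <;> fin_cases j <;>
      simp [Matrix.mul_apply, Fin.sum_univ_three, cayE, cross3, Pi.add_apply]
    · linear_combination (-2 + b 2*d 2 + b 1*d 1 + b 0*d 0) * hbd
    · linear_combination (2*d 2 + 2*b 2 - 2*b 1*d 0 + 2*b 0*d 1) * hbd
    · linear_combination (-2*d 1 - 2*b 2*d 0 - 2*b 1 + 2*b 0*d 2) * hbd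
    · linear_combination (-2*d 2 - 2*b 2 + 2*b 1*d 0 - 2*b 0*d 1) * hbd
    · linear_combination (-2 + b 2*d 2 + b 1*d 1 + b 0*d 0) * hbd
    · linear_combination (2*d 0 - 2*b 2*d 1 + 2*b 1*d 2 + 2*b 0) * hbd
    · linear_combination (2*d 1 + 2*b 2*d 0 + 2*b 1 - 2*b 0*d 2) * hbd
    · linear_combination (-2*d 0 + 2*b 2*d 1 - 2*b 1*d 2 - 2*b 0) * hbd
    · linear_combination (-2 + b 2*d 2 + b 1*d 1 + b 0*d 0) * hbd
  rw [gibbsRot_eq, gibbsRot_eq, gibbsRot_eq, Matrix.smul_mul, Matrix.mul_smul,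
    smul_smul, hE, hq, mul_inv]

lemma det_one_add_fin3 (A : Matrix (Fin 3) (Fin 3) ℝ) :
    (1 + A).det = 1 + A.trace + (adjugate A).trace + A.det := by
  simp [Matrix.det_fin_three, Matrix.trace_fin_three, Matrix.adjugate_fin_three,
    Matrix.add_apply, Matrix.one_apply]
  ring

lemma det_one_add_rot (R : Matrix (Fin 3) (Fin 3) ℝ) (hR : Rᵀ * R = 1) (hdet : R.det = 1) :
    (1 + R).det = 2 + 2 * R.trace := by
  have hadj : adjugate R = Rᵀ := by
    have h := Matrix.mul_adjugate R
    rw [hdet, one_smul] at h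
    calc adjugate R = (Rᵀ * R) * adjugate R := by rw [hR, one_mul]
      _ = Rᵀ * (R * adjugate R) := by rw [Matrix.mul_assoc]
      _ = Rᵀ := by rw [h, mul_one]
  rw [det_one_add_fin3, hadj, Matrix.trace_transpose, hdet]; ring

/-- Surjectivity of the Cayley transform onto rotations with trace `≠ -1`. -/
lemma cay_surj (R : Matrix (Fin 3) (Fin 3) ℝ) (hR : Rᵀ * R = 1) (hdet : R.det = 1)
    (htr : R.trace ≠ -1) : ∃ v : Fin 3 → ℝ, gibbsRot v = R := by
  have hA : IsUnit (1 + R).det := by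
    rw [det_one_add_rot R hR hdet]
    exact isUnit_iff_ne_zero.mpr (by intro h; apply htr; linarith)
  set A := 1 + R with hAdef
  have hA1 : A * A⁻¹ = 1 := Matrix.mul_nonsing_inv _ hA
  have hA2 : A⁻¹ * A = 1 := Matrix.nonsing_inv_mul _ hA
  have hcomm : A⁻¹ * R = R * A⁻¹ := by
    have h1 : R * A = A * R := by rw [hAdef]; noncomm_ring
    calc A⁻¹ * R = A⁻¹ * (R * (A * A⁻¹)) := by rw [hA1, mul_one]
      _ = A⁻¹ * (R * A) * A⁻¹ := by simp only [Matrix.mul_assoc]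
      _ = A⁻¹ * (A * R) * A⁻¹ := by rw [h1]
      _ = (A⁻¹ * A) * (R * A⁻¹) := by simp only [Matrix.mul_assoc]
      _ = R * A⁻¹ := by rw [hA2, one_mul]
  set S := (R - 1) * A⁻¹ with hSdef
  have cancelA : ∀ X Y : Matrix (Fin 3) (Fin 3) ℝ, X * A = Y * A → X = Y := by
    intro X Y h
    calc X = X * A * A⁻¹ := by rw [Matrix.mul_assoc, hA1, mul_one]
      _ = Y * A * A⁻¹ := by rw [h]
      _ = Y := by rw [Matrix.mul_assoc, hA1, mul_one]
  have hAinvRA : A⁻¹ * (R * A) = R := by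
    rw [← Matrix.mul_assoc, hcomm, Matrix.mul_assoc, hA2, mul_one]
  have hSR : (1 - S) * R = 1 + S := by
    apply cancelA
    have e1 : (1 - S) * R * A = R * A - (R - 1) * R := by
      rw [Matrix.mul_assoc, sub_mul, one_mul, hSdef, Matrix.mul_assoc, hAinvRA]
    have e2 : (1 + S) * A = A + (R - 1) := by
      rw [add_mul, one_mul, hSdef, Matrix.mul_assoc, hA2, mul_one]
    rw [e1, e2, hAdef]
    noncomm_ring
  have hskew : Sᵀ = -S := by
    have hAT : IsUnit Aᵀ.det := by rwa [Matrix.det_transpose]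
    have hAT2 : (Aᵀ)⁻¹ * Aᵀ = 1 := Matrix.nonsing_inv_mul _ hAT
    have hST : Sᵀ = (Aᵀ)⁻¹ * (Rᵀ - 1) := by
      rw [hSdef, Matrix.transpose_mul, Matrix.transpose_nonsing_inv, Matrix.transpose_sub,
        Matrix.transpose_one]
    rw [hST]
    apply cancelA
    have key : (Rᵀ - 1) * A = Rᵀ - R := by
      rw [hAdef, sub_mul, one_mul, mul_add, mul_one, hR]; abel
    have key2 : Aᵀ * (S * A) = R - Rᵀ := by
      rw [hSdef, Matrix.mul_assoc (R - 1), hA2, mul_one, hAdef, Matrix.transpose_add,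
        Matrix.transpose_one, add_mul, one_mul, mul_sub, mul_one, hR]
      abel
    have key3 : Aᵀ * (-(S * A)) = Rᵀ - R := by rw [mul_neg, key2, neg_sub]
    calc (Aᵀ)⁻¹ * (Rᵀ - 1) * A = (Aᵀ)⁻¹ * ((Rᵀ - 1) * A) := by rw [Matrix.mul_assoc]
      _ = (Aᵀ)⁻¹ * (Rᵀ - R) := by rw [key]
      _ = (Aᵀ)⁻¹ * (Aᵀ * (-(S * A))) := by rw [key3]
      _ = -(S * A) := by rw [← Matrix.mul_assoc, hAT2, one_mul]
      _ = -S * A := by rw [neg_mul]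
  refine ⟨![S 2 1, S 0 2, S 1 0], ?_⟩
  have hSW : skewW ![S 2 1, S 0 2, S 1 0] = S := by
    ext i j
    have h := fun i j => congrFun (congrFun hskew i) j
    simp only [Matrix.transpose_apply, Matrix.neg_apply] at h
    fin_cases i <;> fin_cases j <;>
      simp [skewW] <;> linarith [h 0 0, h 1 1, h 2 2, h 0 1, h 0 2, h 1 2]
  have hdetS : IsUnit (1 - S).det := by rw [← hSW]; exact isUnit_det_one_sub _
  rw [gibbsRot, hSW, ← hSR, Matrix.nonsing_inv_mul_cancel_left _ _ hdetS]

/-- Injectivity of the Cayley transform. -/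
lemma cay_inj {u v : Fin 3 → ℝ} (h : gibbsRot u = gibbsRot v)
    (hd : IsUnit (1 + gibbsRot v).det) : u = v := by
  have keyu : (1 - skewW u) * gibbsRot u = 1 + skewW u := by
    rw [gibbsRot, Matrix.mul_nonsing_inv_cancel_left _ _ (isUnit_det_one_sub u)]
  rw [h] at keyu
  set Rt := gibbsRot v with hRt
  have keyv : (1 - skewW v) * Rt = 1 + skewW v := by
    rw [hRt, gibbsRot, Matrix.mul_nonsing_inv_cancel_left _ _ (isUnit_det_one_sub v)]
  have h3 : (skewW u - skewW v) * (1 + Rt) = 0 := by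
    have hsub : (1 - skewW u) * Rt - (1 - skewW v) * Rt = (1 + skewW u) - (1 + skewW v) := by
      rw [keyu, keyv]
    calc (skewW u - skewW v) * (1 + Rt)
        = ((1 + skewW u) - (1 + skewW v)) - ((1 - skewW u) * Rt - (1 - skewW v) * Rt) := by
          noncomm_ring
      _ = 0 := by rw [hsub, sub_self]
  have h4 : skewW u - skewW v = 0 := by
    have hinv : (1 + Rt) * (1 + Rt)⁻¹ = 1 := Matrix.mul_nonsing_inv _ hd
    calc skewW u - skewW v = (skewW u - skewW v) * ((1 + Rt) * (1 + Rt)⁻¹) := by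
          rw [hinv, mul_one]
      _ = ((skewW u - skewW v) * (1 + Rt)) * (1 + Rt)⁻¹ := by rw [Matrix.mul_assoc]
      _ = 0 := by rw [h3, Matrix.zero_mul]
  have h5 := sub_eq_zero.mp h4
  have e : ∀ i j, skewW u i j = skewW v i j := fun i j => congrFun (congrFun h5 i) j
  funext i; fin_cases i
  · simpa [skewW] using e 2 1
  · simpa [skewW] using e 0 2
  · simpa [skewW] using e 1 0

lemma build_key (v ν : Fin 3 → ℝ) (hν1 : dot3 ν ν = 1) :
    ((1 + (dot3 v ν)^2)⁻¹ • ((v - dot3 v ν • ν) - dot3 v ν • cross3 (v - dot3 v ν • ν) ν))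
      + dot3 v ν • ν
      + cross3 ((1 + (dot3 v ν)^2)⁻¹ • ((v - dot3 v ν • ν) - dot3 v ν • cross3 (v - dot3 v ν • ν) ν)) (dot3 v ν • ν)
      = v := by
  have ht2 : (1:ℝ) + (dot3 v ν)^2 ≠ 0 := by positivity
  funext i
  fin_cases i <;>
    ( simp only [dot3, cross3, Pi.add_apply, Pi.sub_apply, Pi.smul_apply, smul_eq_mul,
        Matrix.cons_val_zero, Matrix.cons_val_one, Matrix.head_cons, Fin.isValue,
        Matrix.cons_val_two, Matrix.tail_cons, Fin.reduceFinMk] at hν1 ⊢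
      field_simp )
  · linear_combination (v 0 * (v 0 * ν 0 + v 1 * ν 1 + v 2 * ν 2)^2) * hν1
  · linear_combination (v 1 * (v 0 * ν 0 + v 1 * ν 1 + v 2 * ν 2)^2) * hν1
  · linear_combination (v 2 * (v 0 * ν 0 + v 1 * ν 1 + v 2 * ν 2)^2) * hν1

lemma build_orth (v ν : Fin 3 → ℝ) (hν1 : dot3 ν ν = 1) :
    dot3 ((1 + (dot3 v ν)^2)⁻¹ • ((v - dot3 v ν • ν) - dot3 v ν • cross3 (v - dot3 v ν • ν) ν)) ν = 0 := by
  have ht2 : (1:ℝ) + (dot3 v ν)^2 ≠ 0 := by positivity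
  simp only [dot3, cross3, Pi.add_apply, Pi.sub_apply, Pi.smul_apply, smul_eq_mul,
    Matrix.cons_val_zero, Matrix.cons_val_one, Matrix.head_cons, Fin.isValue,
    Matrix.cons_val_two, Matrix.tail_cons] at hν1 ⊢
  field_simp
  linear_combination (-(v 0 * ν 0 + v 1 * ν 1 + v 2 * ν 2)) * hν1

lemma dot3_smul_right (x y : Fin 3 → ℝ) (c : ℝ) : dot3 x (c • y) = c * dot3 x y := by
  simp [dot3]; ring

lemma sq3_zero {x y z : ℝ} (h : x^2 + y^2 + z^2 = 0) : x = 0 ∧ y = 0 ∧ z = 0 := by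
  refine ⟨?_, ?_, ?_⟩ <;> nlinarith [sq_nonneg x, sq_nonneg y, sq_nonneg z]

/-- **Unique drilling–bending decomposition** (Section 4): every rotation `R ∈ SO(3)`
with `tr R ≠ −1` factors uniquely as `R = R_b R_d`, where `R_d = Rot(d)` is a rotation
about the unit normal `ν` (drilling) and `R_b = Rot(b)` is a rotation about an axis
`b` lying in the plane orthogonal to `ν` (bending). -/
theorem drilling_bending_decomposition
    (ν : Fin 3 → ℝ) (hν : len3 ν = 1)
    (R : Matrix (Fin 3) (Fin 3) ℝ)
    (hR : Rᵀ * R = 1) (hdet : R.det = 1) (htr : R.trace ≠ -1) :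
    ∃! bd : (Fin 3 → ℝ) × (Fin 3 → ℝ),
      dot3 bd.1 ν = 0 ∧ (∃ t : ℝ, bd.2 = t • ν) ∧
        R = gibbsRot bd.1 * gibbsRot bd.2 := by
  have hν0 : 0 ≤ dot3 ν ν := by
    simp only [dot3]; nlinarith [sq_nonneg (ν 0), sq_nonneg (ν 1), sq_nonneg (ν 2)]
  have hν1 : dot3 ν ν = 1 := by
    have h := congrArg (· ^ 2) hν
    simpa [len3, Real.sq_sqrt hν0] using h
  obtain ⟨v, hcay⟩ := cay_surj R hR hdet htr
  have hd1R : IsUnit (1 + R).det := by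
    rw [det_one_add_rot R hR hdet]
    exact isUnit_iff_ne_zero.mpr (by intro h; apply htr; linarith)
  obtain ⟨t, htdef⟩ : ∃ t : ℝ, t = dot3 v ν := ⟨_, rfl⟩
  obtain ⟨b, hbdef⟩ : ∃ b : Fin 3 → ℝ,
      b = (1 + t^2)⁻¹ • ((v - t • ν) - t • cross3 (v - t • ν) ν) := ⟨_, rfl⟩
  have hkey : b + t • ν + cross3 b (t • ν) = v := by
    rw [hbdef, htdef]; exact build_key v ν hν1
  have horth : dot3 b ν = 0 := by rw [hbdef, htdef]; exact build_orth v ν hν1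
  have hbd : dot3 b (t • ν) = 0 := by rw [dot3_smul_right, horth, mul_zero]
  refine ⟨⟨b, t • ν⟩, ⟨horth, ⟨t, rfl⟩, ?_⟩, ?_⟩
  · rw [gibbsRot_mul hbd, hkey, hcay]
  · rintro ⟨b', d'⟩ ⟨hb', ⟨t', rfl⟩, hR'⟩
    have hbd' : dot3 b' (t' • ν) = 0 := by rw [dot3_smul_right, hb', mul_zero]
    have hw' : gibbsRot (b' + t' • ν + cross3 b' (t' • ν)) = R :=
      (gibbsRot_mul hbd').symm.trans hR'.symm
    have heq : b' + t' • ν + cross3 b' (t' • ν) = v :=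
      cay_inj (hw'.trans hcay.symm) (by rw [hcay]; exact hd1R)
    have htt : t' = t := by
      have hdw : dot3 (b' + t' • ν + cross3 b' (t' • ν)) ν = t' := by
        have hν1' := hν1
        have hb'' := hb'
        simp only [dot3, cross3, Pi.add_apply, Pi.smul_apply, smul_eq_mul,
          Matrix.cons_val_zero, Matrix.cons_val_one, Matrix.head_cons, Fin.isValue,
          Matrix.cons_val_two, Matrix.tail_cons] at hν1' hb'' ⊢
        linear_combination hb'' + t' * hν1'
      rw [heq] at hdw
      rw [← hdw, htdef]
    subst htt
    have E' : ∀ i, b' i + cross3 b' (t' • ν) i = b i + cross3 b (t' • ν) i := by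
      intro i
      have h := congrFun (heq.trans hkey.symm) i
      simp only [Pi.add_apply] at h
      linarith
    have h0 := E' 0; have h1 := E' 1; have h2 := E' 2
    simp only [cross3, Pi.smul_apply, smul_eq_mul, Matrix.cons_val_zero, Matrix.cons_val_one,
      Matrix.head_cons, Fin.isValue, Matrix.cons_val_two, Matrix.tail_cons] at h0 h1 h2
    have hsq : (b' 0 - b 0)^2 + (b' 1 - b 1)^2 + (b' 2 - b 2)^2 = 0 := by
      linear_combination (b' 0 - b 0) * h0 + (b' 1 - b 1) * h1 + (b' 2 - b 2) * h2
    obtain ⟨z0, z1, z2⟩ := sq3_zero hsq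
    have e0 : b' 0 = b 0 := sub_eq_zero.mp z0
    have e1 : b' 1 = b 1 := sub_eq_zero.mp z1
    have e2 : b' 2 = b 2 := sub_eq_zero.mp z2
    have hbb : b' = b := by
      funext i; fin_cases i
      · exact e0
      · exact e1
      · exact e2
    rw [hbb]
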